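/- arXiv:1308.2737 — 4 statements merged into one kernel-verified Lean document; each statement's English description precedes it below -/
import Mathlib

section
/- Let φ(z) = (z-α₁)(z-α₂)/(6z²) with |α₁| > 1 > |α₂| > 0, let d ≥ 0, and let E(z) be a rational function bounded and holomorphic on {|z| ≥ 1}. Define ψ(z) = 6z²(z^{-d} - E(z))/((z-α₁)(z-α₂)). Then all poles of ψ lie in the open unit disc if and only if E(α₁) = α₁^{-d}. -/
/-!
On `{|z| ≥ 1}` the filter is `ψ(z) = N(z)/(z - α₁)` with
`N(z) = 6z²(z^{-d} - E(z))/(z - α₂)`, and `N` is holomorphic there because `0` and `α₂` lie in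
the open unit disc. So `α₁` is the only candidate pole outside the disc, and it is removable iff
`N(α₁) = 0`: necessity because `(z - α₁)ψ(z) → 0`, sufficiency because the slope function
`dslope N α₁` is holomorphic.
-/

open Filter Topology

theorem exists_differentiableOn_eq_div_sub_iff {N : ℂ → ℂ} {s : Set ℂ} {a : ℂ} (hs : s ∈ 𝓝 a)
    (hN : DifferentiableOn ℂ N s) :
    (∃ f : ℂ → ℂ, DifferentiableOn ℂ f s ∧ ∀ z ∈ s, z ≠ a → f z = N z / (z - a)) ↔ N a = 0 := by
  constructor
  · rintro ⟨f, hf, hfN⟩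
    have hNf : Tendsto N (𝓝[≠] a) (𝓝 0) := by
      have hlim : Tendsto (fun z => (z - a) * f z) (𝓝[≠] a) (𝓝 0) := by
        have hcont : ContinuousAt (fun z => (z - a) * f z) a :=
          (continuousAt_id.sub continuousAt_const).mul (hf.differentiableAt hs).continuousAt
        simpa using hcont.tendsto.mono_left nhdsWithin_le_nhds
      refine hlim.congr' ?_
      filter_upwards [self_mem_nhdsWithin, nhdsWithin_le_nhds hs] with z hza hzs
      rw [hfN z hzs hza, mul_div_cancel₀ _ (sub_ne_zero.mpr hza)]
    exact tendsto_nhds_unique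
      ((hN.differentiableAt hs).continuousAt.tendsto.mono_left nhdsWithin_le_nhds) hNf
  · intro hNa
    refine ⟨dslope N a, (Complex.differentiableOn_dslope hs).2 hN, fun z _ hza => ?_⟩
    rw [dslope_of_ne _ hza, slope_def_field, hNa, sub_zero]

theorem stmt12_general (α₁ α₂ : ℂ) (h1 : 1 < ‖α₁‖) (h2 : ‖α₂‖ < 1)
    (d : ℕ) (E : ℂ → ℂ)
    (hE : DifferentiableOn ℂ E {z : ℂ | 1 ≤ ‖z‖}) :
    (∃ ψ' : ℂ → ℂ, DifferentiableOn ℂ ψ' {z : ℂ | 1 ≤ ‖z‖} ∧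
        ∀ z : ℂ, 1 ≤ ‖z‖ → z ≠ α₁ →
          ψ' z = 6 * z ^ 2 * (z ^ (-(d : ℤ)) - E z) / ((z - α₁) * (z - α₂)))
      ↔ E α₁ = α₁ ^ (-(d : ℤ)) := by
  set S : Set ℂ := {z : ℂ | 1 ≤ ‖z‖}
  have hS : S ∈ 𝓝 α₁ := mem_of_superset
    ((isOpen_lt continuous_const continuous_norm).mem_nhds h1) fun z (hz : 1 < ‖z‖) => hz.le
  have hα₁S : α₁ ∈ S := h1.le
  have hne_zero : ∀ z ∈ S, z ≠ 0 := by
    rintro z hz rfl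
    norm_num [S] at hz
  have hsub_ne_zero : ∀ z ∈ S, z - α₂ ≠ 0 := fun z hz =>
    sub_ne_zero.mpr fun h => by rw [h] at hz; exact (h2.trans_le hz).false
  set N : ℂ → ℂ := fun z => 6 * z ^ 2 * (z ^ (-(d : ℤ)) - E z) / (z - α₂)
  have hN : DifferentiableOn ℂ N S := fun z hz =>
    (((differentiableAt_id.pow 2).const_mul 6).differentiableWithinAt.mul
      ((differentiableAt_zpow.mpr (Or.inl (hne_zero z hz))).differentiableWithinAt.sub
        (hE z hz))).div (differentiableWithinAt_id.sub_const α₂) (hsub_ne_zero z hz)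
  have hψ : ∀ z, 6 * z ^ 2 * (z ^ (-(d : ℤ)) - E z) / ((z - α₁) * (z - α₂)) = N z / (z - α₁) :=
    fun z => by rw [mul_comm (z - α₁), ← div_div]
  simp_rw [hψ]
  refine (exists_differentiableOn_eq_div_sub_iff hS hN).trans ?_
  have h6α₁ : (6 : ℂ) * α₁ ^ 2 ≠ 0 := by simp [hne_zero α₁ hα₁S]
  rw [div_eq_zero_iff, or_iff_left (hsub_ne_zero α₁ hα₁S), mul_eq_zero, or_iff_right h6α₁,
    sub_eq_zero, eq_comm]

/-- Stability characterization of the inverse filter: with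
`φ(z) = (z-α₁)(z-α₂)/(6z²)`, `|α₁| > 1 > |α₂| > 0`, `d ≥ 0`, and a rational `E`
bounded and holomorphic on `{|z| ≥ 1}`, the filter
`ψ(z) = 6z²(z^{-d} - E(z))/((z-α₁)(z-α₂))` has all its poles in the open unit disc
(i.e. it agrees off `α₁` with a function holomorphic on `{|z| ≥ 1}`) if and only if
`E(α₁) = α₁^{-d}`. -/
theorem stmt12 (α₁ α₂ : ℂ) (h1 : 1 < ‖α₁‖) (h2 : ‖α₂‖ < 1)
    (h2' : 0 < ‖α₂‖) (d : ℕ) (E : ℂ → ℂ)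
    (hE : DifferentiableOn ℂ E {z : ℂ | 1 ≤ ‖z‖})
    (hbdd : ∃ M : ℝ, ∀ z : ℂ, 1 ≤ ‖z‖ → ‖E z‖ ≤ M)
    (hrat : ∃ p q : Polynomial ℂ, q ≠ 0 ∧
      ∀ z : ℂ, q.eval z ≠ 0 → E z = p.eval z / q.eval z) :
    (∃ ψ' : ℂ → ℂ, DifferentiableOn ℂ ψ' {z : ℂ | 1 ≤ ‖z‖} ∧
        ∀ z : ℂ, 1 ≤ ‖z‖ → z ≠ α₁ →
          ψ' z = 6 * z ^ 2 * (z ^ (-(d : ℤ)) - E z) / ((z - α₁) * (z - α₂)))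
      ↔ E α₁ = α₁ ^ (-(d : ℤ)) :=
  stmt12_general α₁ α₂ h1 h2 d E hE
end

section
/- Let φ: ℝ → ℝ generate a Riesz basis: there exist constants 0 < a ≤ b such that for every c ∈ ℓ²(ℤ₊), a‖c‖_{ℓ²} ≤ ‖∑_{n≥0} c(n) φ(·-n)‖_{L²} ≤ b‖c‖_{ℓ²}. Let ψ, φ_s ∈ ℓ¹(ℤ₊) be causal sequences and d ≥ 0 an integer. Suppose x(t) = ∑_{n≥0} c(n) φ(t-n) with c ∈ ℓ², c(n) = 0 for n < 0, and x(m) = (φ_s ∗ c)(m) for all integers m. Define y(t) = ∑_{n≥0} (ψ ∗ x|_ℤ)(n) φ(t-n), where x|_ℤ denotes the sampled sequence. Then ‖x(·-d) - y‖_{L²} ≤ (b/a) · ‖z^{-d} - ψ(z)φ_s(z)‖_{H^∞} · ‖x‖_{L²}. -/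
open MeasureTheory

/-- ℓ² norm of a causal (one-sided) real sequence. -/
noncomputable def l2norm (c : ℕ → ℝ) : ℝ := Real.sqrt (∑' n : ℕ, (c n) ^ 2)

/-- L² norm of a real signal on `ℝ₊ = [0, ∞)`. -/
noncomputable def L2norm (f : ℝ → ℝ) : ℝ := Real.sqrt (∫ t in Set.Ici (0 : ℝ), (f t) ^ 2)

/-- Convolution of causal sequences: `(e ∗ c)(n) = ∑_{k=0}^{n} e(n-k) c(k)`. -/
def cconv (e c : ℕ → ℝ) (n : ℕ) : ℝ := ∑ k ∈ Finset.range (n + 1), e (n - k) * c k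

/-- Z-transform of a causal sequence, evaluated at `w`: `ê(w) = ∑_{n≥0} e(n) w⁻ⁿ`. -/
noncomputable def Ztrans (e : ℕ → ℝ) (w : ℂ) : ℂ := ∑' n : ℕ, (e n : ℂ) * w⁻¹ ^ n

/-- `H^∞` norm of a causal sequence: sup of `|ê(e^{iθ})|` over the unit circle. -/
noncomputable def HinfNorm (e : ℕ → ℝ) : ℝ :=
  ⨆ θ : ℝ, ‖Ztrans e (Complex.exp (θ * Complex.I))‖

/-- The `d`-step delay sequence, i.e. the impulse response of `z^{-d}`. -/
def delaySeq (d : ℕ) (n : ℕ) : ℝ := if n = d then 1 else 0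

/-!
With `E = δ_d - ψ ∗ φ_s`, the sampling identity `x|ℤ = φ_s ∗ c` and associativity of causal
convolution give `x(· - d) - y = ∑ₙ (E ∗ c)(n) φ(· - n)`. The upper Riesz bound, the multiplier
bound `‖E ∗ c‖₂ ≤ ‖E‖_{H^∞} ‖c‖₂` and the lower Riesz bound `‖c‖₂ ≤ ‖x‖ / a` then chain together.
The multiplier bound is Parseval's identity on the unit circle for the truncations of `E` and `c`,
which are polynomials in `z⁻¹`, followed by letting the truncation length tend to infinity.

The series `∑' n, c n * φ (t - n)` are `tsum`s, which are `0` off summability, so they add up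
termwise only where `∑ₙ φ(t - n)² < ∞`. This holds for almost every `t`: the Riesz bounds at unit
sequences make `φ²` integrable on `ℝ`, and `∫_{[k, k+1)} ∑ₙ φ(t - n)² dt ≤ ∫ φ²`.
-/

section Convolution

open Finset PowerSeries

theorem cconv_eq_sum_antidiagonal (e c : ℕ → ℝ) (n : ℕ) :
    cconv e c n = ∑ p ∈ antidiagonal n, e p.1 * c p.2 := by
  rw [← Nat.sum_antidiagonal_swap]
  exact (Nat.sum_antidiagonal_eq_sum_range_succ (fun i j => e j * c i) n).symm

theorem mk_cconv (e c : ℕ → ℝ) : mk (cconv e c) = mk e * mk c := by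
  ext n
  rw [coeff_mk, coeff_mul, cconv_eq_sum_antidiagonal]
  simp only [coeff_mk]

theorem cconv_assoc (e f c : ℕ → ℝ) : cconv e (cconv f c) = cconv (cconv e f) c := by
  funext n
  have h := congrArg (coeff n) (show mk (cconv e (cconv f c)) = mk (cconv (cconv e f) c) by
    rw [mk_cconv, mk_cconv, mk_cconv, mk_cconv, mul_assoc])
  simpa only [coeff_mk] using h

theorem cconv_sub_left (e f c : ℕ → ℝ) (n : ℕ) :
    cconv (fun k => e k - f k) c n = cconv e c n - cconv f c n := by
  simp only [cconv, sub_mul, sum_sub_distrib]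

theorem hasSum_delaySeq (d : ℕ) : HasSum (delaySeq d) 1 :=
  hasSum_ite_eq d 1

theorem delaySeq_sq (d k : ℕ) : delaySeq d k ^ 2 = delaySeq d k := by
  unfold delaySeq; split_ifs <;> norm_num

theorem delaySeq_nonneg (d k : ℕ) : 0 ≤ delaySeq d k := by
  unfold delaySeq; split_ifs <;> norm_num

theorem summable_abs_delaySeq (d : ℕ) : Summable fun k => |delaySeq d k| :=
  (hasSum_delaySeq d).summable.congr fun k => (abs_of_nonneg (delaySeq_nonneg d k)).symm

theorem l2norm_delaySeq (d : ℕ) : l2norm (delaySeq d) = 1 := by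
  simp only [l2norm, delaySeq_sq, (hasSum_delaySeq d).tsum_eq, Real.sqrt_one]

theorem tsum_delaySeq_mul (d : ℕ) (v : ℕ → ℝ) : ∑' k, delaySeq d k * v k = v d := by
  rw [tsum_eq_single d fun k hk => by rw [delaySeq, if_neg hk, zero_mul], delaySeq, if_pos rfl,
    one_mul]

theorem cconv_delaySeq (d : ℕ) (c : ℕ → ℝ) (n : ℕ) :
    cconv (delaySeq d) c n = if d ≤ n then c (n - d) else 0 := by
  rw [cconv]
  simp only [delaySeq, ite_mul, one_mul, zero_mul]
  split_ifs with h
  · rw [sum_eq_single_of_mem (n - d) (mem_range.2 (by omega))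
      (fun k hk hne => if_neg (by rw [mem_range] at hk; omega)), if_pos (by omega)]
  · exact sum_eq_zero fun k hk => if_neg (by rw [mem_range] at hk; omega)

theorem summable_abs_cconv {e c : ℕ → ℝ} (he : Summable fun n => |e n|)
    (hc : Summable fun n => |c n|) : Summable fun n => |cconv e c n| := by
  have := summable_norm_sum_mul_antidiagonal_of_summable_norm (f := e) (g := c)
    (by simpa only [Real.norm_eq_abs] using he) (by simpa only [Real.norm_eq_abs] using hc)
  simpa only [Real.norm_eq_abs, ← cconv_eq_sum_antidiagonal] using this

end Convolution

section Fourier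

open Finset Complex Polynomial ComplexConjugate Filter Topology
open scoped Real

theorem integral_exp_int_mul_I (k : ℤ) :
    ∫ θ in (0:ℝ)..2 * π, cexp (k * θ * I) = if k = 0 then (2 * π : ℂ) else 0 := by
  split_ifs with hk
  · simp [hk]
  · have hkI : (k : ℂ) * I ≠ 0 := mul_ne_zero (Int.cast_ne_zero.2 hk) I_ne_zero
    have hperiod : cexp (k * I * (2 * π : ℝ)) = 1 := by
      rw [← exp_int_mul_two_pi_mul_I k]; push_cast; ring_nf
    simp_rw [mul_right_comm _ _ I]
    rw [integral_exp_mul_complex hkI, hperiod]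
    simp

theorem inv_exp_pow_mul_conj (θ : ℝ) (m n : ℕ) :
    (cexp (θ * I))⁻¹ ^ m * conj ((cexp (θ * I))⁻¹ ^ n) =
      cexp (((n - m : ℤ) : ℂ) * θ * I) := by
  rw [← Complex.exp_neg, ← Complex.exp_nat_mul, ← Complex.exp_nat_mul, ← exp_conj,
    ← exp_add]
  congr 1
  simp only [map_mul, map_neg, map_natCast, conj_ofReal, conj_I]
  push_cast
  ring

theorem integral_norm_sq_aeval_circle (p : ℝ[X]) {N : ℕ} (hN : p.natDegree < N) :
    ∫ θ in (0:ℝ)..2 * π, ‖aeval (cexp (θ * I))⁻¹ p‖ ^ 2 =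
      2 * π * ∑ k ∈ range N, p.coeff k ^ 2 := by
  have hexpand : ∀ θ : ℝ, ((‖aeval (cexp (θ * I))⁻¹ p‖ ^ 2 : ℝ) : ℂ) =
      ∑ m ∈ range N, ∑ n ∈ range N,
        (p.coeff m * p.coeff n : ℂ) * cexp (((n - m : ℤ) : ℂ) * θ * I) := by
    intro θ
    rw [ofReal_pow, ← mul_conj', aeval_eq_sum_range' hN, map_sum, sum_mul_sum]
    refine sum_congr rfl fun m _ => sum_congr rfl fun n _ => ?_
    rw [← inv_exp_pow_mul_conj]
    simp only [Complex.real_smul, map_mul, conj_ofReal]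
    ring
  have hint : ∀ m n : ℕ, IntervalIntegrable
      (fun θ : ℝ => (p.coeff m * p.coeff n : ℂ) * cexp (((n - m : ℤ) : ℂ) * θ * I))
      MeasureTheory.volume 0 (2 * π) := fun m n => by
    apply Continuous.intervalIntegrable; fun_prop
  apply ofReal_injective
  rw [← intervalIntegral.integral_ofReal]
  simp_rw [hexpand]
  rw [intervalIntegral.integral_finsetSum fun m _ => by
    apply Continuous.intervalIntegrable; fun_prop]
  simp_rw [intervalIntegral.integral_finsetSum fun n _ => hint _ n,
    intervalIntegral.integral_const_mul, integral_exp_int_mul_I, sub_eq_zero, Nat.cast_inj]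
  push_cast
  rw [mul_sum]
  refine sum_congr rfl fun k hk => ?_
  rw [sum_eq_single_of_mem k hk fun n _ hnk => by rw [if_neg hnk, mul_zero], if_pos rfl]
  ring

theorem norm_inv_exp_pow (θ : ℝ) (k : ℕ) : ‖(cexp (θ * I))⁻¹ ^ k‖ = 1 := by
  rw [norm_pow, norm_inv, norm_exp_ofReal_mul_I, inv_one, one_pow]

theorem norm_Ztrans_term (e : ℕ → ℝ) (θ : ℝ) (k : ℕ) :
    ‖(e k : ℂ) * (cexp (θ * I))⁻¹ ^ k‖ = |e k| := by
  rw [norm_mul, norm_inv_exp_pow, mul_one, norm_real, Real.norm_eq_abs]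

theorem summable_Ztrans_term {e : ℕ → ℝ} (he : Summable fun n => |e n|) (θ : ℝ) :
    Summable fun k => (e k : ℂ) * (cexp (θ * I))⁻¹ ^ k :=
  .of_norm (by simpa only [norm_Ztrans_term] using he)

theorem norm_Ztrans_le {e : ℕ → ℝ} (he : Summable fun n => |e n|) (θ : ℝ) :
    ‖Ztrans e (cexp (θ * I))‖ ≤ ∑' n, |e n| := by
  simpa only [Ztrans, norm_Ztrans_term] using
    norm_tsum_le_tsum_norm (summable_Ztrans_term he θ).norm

theorem HinfNorm_nonneg (e : ℕ → ℝ) : 0 ≤ HinfNorm e :=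
  Real.iSup_nonneg fun _ => norm_nonneg _

theorem norm_Ztrans_le_HinfNorm {e : ℕ → ℝ} (he : Summable fun n => |e n|) (θ : ℝ) :
    ‖Ztrans e (cexp (θ * I))‖ ≤ HinfNorm e :=
  le_ciSup (f := fun θ : ℝ => ‖Ztrans e (cexp (θ * I))‖)
    ⟨∑' n, |e n|, by rintro _ ⟨θ, rfl⟩; exact norm_Ztrans_le he θ⟩ θ

theorem aeval_trunc_mk (e : ℕ → ℝ) (M : ℕ) (z : ℂ) :
    aeval z (PowerSeries.trunc M (PowerSeries.mk e)) = ∑ k ∈ range M, (e k : ℂ) * z ^ k := by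
  rw [aeval_def, PowerSeries.eval₂_trunc_eq_sum_range]
  simp only [PowerSeries.coeff_mk, Complex.coe_algebraMap]

theorem norm_aeval_trunc_le {e : ℕ → ℝ} (he : Summable fun n => |e n|) (M : ℕ) (θ : ℝ) :
    ‖aeval (cexp (θ * I))⁻¹ (PowerSeries.trunc M (PowerSeries.mk e))‖ ≤
      HinfNorm e + ∑' k, |e (k + M)| := by
  have hsplit := (summable_Ztrans_term he θ).sum_add_tsum_nat_add M
  rw [aeval_trunc_mk, eq_sub_of_add_eq hsplit]
  refine (norm_sub_le _ _).trans (add_le_add (norm_Ztrans_le_HinfNorm he θ) ?_)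
  have htail := (summable_nat_add_iff M).2 (summable_Ztrans_term he θ)
  simpa only [norm_Ztrans_term] using norm_tsum_le_tsum_norm htail.norm

theorem continuous_aeval_inv_exp (p : ℝ[X]) :
    Continuous fun θ : ℝ => aeval (cexp (θ * I))⁻¹ p :=
  p.continuous_aeval.comp ((by fun_prop : Continuous fun θ : ℝ => cexp (θ * I)).inv₀
    fun _ => Complex.exp_ne_zero _)

theorem sum_sq_coeff_mul_le {P Q : ℝ[X]} {S : ℝ}
    (hP : ∀ θ : ℝ, ‖aeval (cexp (θ * I))⁻¹ P‖ ≤ S) {N K : ℕ} (hN : (P * Q).natDegree < N)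
    (hK : Q.natDegree < K) :
    ∑ n ∈ range N, (P * Q).coeff n ^ 2 ≤ S ^ 2 * ∑ k ∈ range K, Q.coeff k ^ 2 := by
  have hpointwise : ∀ θ : ℝ, ‖aeval (cexp (θ * I))⁻¹ (P * Q)‖ ^ 2 ≤
      S ^ 2 * ‖aeval (cexp (θ * I))⁻¹ Q‖ ^ 2 := fun θ => by
    rw [map_mul, norm_mul, mul_pow]
    gcongr
    exact hP θ
  refine le_of_mul_le_mul_left ?_ Real.two_pi_pos
  calc 2 * π * ∑ n ∈ range N, (P * Q).coeff n ^ 2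
      = ∫ θ in (0:ℝ)..2 * π, ‖aeval (cexp (θ * I))⁻¹ (P * Q)‖ ^ 2 :=
        (integral_norm_sq_aeval_circle _ hN).symm
    _ ≤ ∫ θ in (0:ℝ)..2 * π, S ^ 2 * ‖aeval (cexp (θ * I))⁻¹ Q‖ ^ 2 :=
        intervalIntegral.integral_mono_on Real.two_pi_pos.le
          (((continuous_aeval_inv_exp _).norm.pow 2).intervalIntegrable _ _)
          ((continuous_const.mul ((continuous_aeval_inv_exp _).norm.pow 2)).intervalIntegrable _ _)
          fun θ _ => hpointwise θ
    _ = 2 * π * (S ^ 2 * ∑ k ∈ range K, Q.coeff k ^ 2) := by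
        rw [intervalIntegral.integral_const_mul, integral_norm_sq_aeval_circle Q hK]
        ring

theorem sum_range_sq_cconv_le_add_tail {e c : ℕ → ℝ} (he : Summable fun n => |e n|)
    (hc : Summable fun n => c n ^ 2) (M : ℕ) :
    ∑ n ∈ range (M + 1), cconv e c n ^ 2 ≤
      (HinfNorm e + ∑' k, |e (k + (M + 1))|) ^ 2 * ∑' n, c n ^ 2 := by
  set P := PowerSeries.trunc (M + 1) (PowerSeries.mk e)
  set Q := PowerSeries.trunc (M + 1) (PowerSeries.mk c)
  have hP : P.natDegree < M + 1 := PowerSeries.natDegree_trunc_lt _ M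
  have hQ : Q.natDegree < M + 1 := PowerSeries.natDegree_trunc_lt _ M
  have hPQ : (P * Q).natDegree < 2 * M + 1 := by
    have := natDegree_mul_le (p := P) (q := Q)
    omega
  have hcoeff : ∀ n < M + 1, cconv e c n = (P * Q).coeff n := fun n hn => by
    rw [← Polynomial.coeff_coe, Polynomial.coe_mul,
      ← PowerSeries.coeff_mul_eq_coeff_trunc_mul_trunc _ _ hn, ← mk_cconv, PowerSeries.coeff_mk]
  have hQc : ∑ k ∈ range (M + 1), Q.coeff k ^ 2 ≤ ∑' n, c n ^ 2 := by
    simp only [Q, PowerSeries.coeff_trunc, PowerSeries.coeff_mk]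
    rw [sum_congr rfl fun k hk => by rw [if_pos (mem_range.1 hk)]]
    exact hc.sum_le_tsum _ fun _ _ => sq_nonneg _
  calc ∑ n ∈ range (M + 1), cconv e c n ^ 2
      = ∑ n ∈ range (M + 1), (P * Q).coeff n ^ 2 :=
        sum_congr rfl fun n hn => by rw [hcoeff n (mem_range.1 hn)]
    _ ≤ ∑ n ∈ range (2 * M + 1), (P * Q).coeff n ^ 2 :=
        sum_le_sum_of_subset_of_nonneg (range_subset_range.2 (by omega))
          fun _ _ _ => sq_nonneg _
    _ ≤ (HinfNorm e + ∑' k, |e (k + (M + 1))|) ^ 2 * ∑ k ∈ range (M + 1), Q.coeff k ^ 2 :=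
        sum_sq_coeff_mul_le (norm_aeval_trunc_le he (M + 1)) hPQ hQ
    _ ≤ (HinfNorm e + ∑' k, |e (k + (M + 1))|) ^ 2 * ∑' n, c n ^ 2 := by gcongr

theorem sum_range_sq_cconv_le {e c : ℕ → ℝ} (he : Summable fun n => |e n|)
    (hc : Summable fun n => c n ^ 2) (N : ℕ) :
    ∑ n ∈ range N, cconv e c n ^ 2 ≤ HinfNorm e ^ 2 * ∑' n, c n ^ 2 := by
  have htail : Tendsto (fun M => (HinfNorm e + ∑' k, |e (k + (M + 1))|) ^ 2 * ∑' n, c n ^ 2)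
      atTop (𝓝 ((HinfNorm e + 0) ^ 2 * ∑' n, c n ^ 2)) :=
    (((tendsto_sum_nat_add fun n => |e n|).comp (tendsto_add_atTop_nat 1)).const_add _
      |>.pow 2).mul_const _
  rw [add_zero] at htail
  refine ge_of_tendsto htail (eventually_atTop.2 ⟨N, fun M hM => ?_⟩)
  exact (sum_le_sum_of_subset_of_nonneg (range_subset_range.2 (by omega))
    fun _ _ _ => sq_nonneg _).trans (sum_range_sq_cconv_le_add_tail he hc M)

theorem summable_sq_cconv {e c : ℕ → ℝ} (he : Summable fun n => |e n|)
    (hc : Summable fun n => c n ^ 2) : Summable fun n => cconv e c n ^ 2 :=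
  summable_of_sum_range_le (fun _ => sq_nonneg _) (sum_range_sq_cconv_le he hc)

theorem l2norm_cconv_le {e c : ℕ → ℝ} (he : Summable fun n => |e n|)
    (hc : Summable fun n => c n ^ 2) : l2norm (cconv e c) ≤ HinfNorm e * l2norm c := by
  have h := (summable_sq_cconv he hc).tsum_le_of_sum_range_le (sum_range_sq_cconv_le he hc)
  rw [l2norm, l2norm, ← Real.sqrt_sq (HinfNorm_nonneg e), ← Real.sqrt_mul (sq_nonneg _)]
  exact Real.sqrt_le_sqrt h

end Fourier

section Translates

open Set Function Filter MeasureTheory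
open scoped ENNReal

theorem setLIntegral_Ico_tsum_comp_sub_nat_le {f : ℝ → ℝ≥0∞} (hf : AEMeasurable f) (k : ℤ) :
    ∫⁻ t in Ico (k : ℝ) (k + 1), ∑' n : ℕ, f (t - n) ≤ ∫⁻ t, f t := by
  have hshift : ∀ n : ℕ, ∫⁻ t in Ico (k : ℝ) (k + 1), f (t - n) =
      ∫⁻ s in Ico ((k - n : ℤ) : ℝ) ((k - n : ℤ) + 1), f s := fun n => by
    have h := (measurePreserving_sub_right volume (n : ℝ)).setLIntegral_comp_preimage_emb
      (measurableEmbedding_subRight _) f (Ico ((k - n : ℤ) : ℝ) ((k - n : ℤ) + 1))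
    rw [preimage_sub_const_Ico] at h
    convert h using 3
    push_cast
    ring_nf
  have hdisj :
      Pairwise (Disjoint on fun n : ℕ => Ico ((k - n : ℤ) : ℝ) ((k - n : ℤ) + 1)) :=
    (pairwise_disjoint_Ico_intCast ℝ).comp_of_injective
      ((sub_right_injective (b := k)).comp Nat.cast_injective)
  rw [lintegral_tsum (f := fun (n : ℕ) t => f (t - n)) fun n => (hf.comp_quasiMeasurePreserving
      (measurePreserving_sub_right volume (n : ℝ)).quasiMeasurePreserving).restrict,
    tsum_congr hshift, ← lintegral_iUnion (fun _ => measurableSet_Ico) hdisj]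
  exact setLIntegral_le_lintegral _ _

theorem ae_tsum_comp_sub_nat_ne_top {f : ℝ → ℝ≥0∞} (hf : AEMeasurable f)
    (hfi : ∫⁻ t, f t ≠ ∞) : ∀ᵐ t, ∑' n : ℕ, f (t - n) ≠ ∞ := by
  rw [← Measure.restrict_univ (μ := volume), ← iUnion_Ico_intCast, ae_restrict_iUnion_iff]
  intro k
  have hmeas :
      AEMeasurable (fun t => ∑' n : ℕ, f (t - n)) (volume.restrict (Ico (k : ℝ) (k + 1))) :=
    AEMeasurable.tsum fun n => (hf.comp_quasiMeasurePreserving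
      (measurePreserving_sub_right volume (n : ℝ)).quasiMeasurePreserving).restrict
  exact (ae_lt_top' hmeas ((setLIntegral_Ico_tsum_comp_sub_nat_le hf k).trans_lt
    hfi.lt_top).ne).mono fun _ h => h.ne

theorem MeasureTheory.Integrable.ae_summable_comp_sub_nat {g : ℝ → ℝ} (hg : Integrable g) :
    ∀ᵐ t, Summable fun n : ℕ => g (t - n) := by
  filter_upwards [ae_tsum_comp_sub_nat_ne_top hg.1.aemeasurable.enorm hg.2.ne] with t ht
  exact .of_nnnorm (ENNReal.tsum_coe_ne_top_iff_summable.1 ht)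

theorem integrable_of_setIntegral_comp_sub_nat_le {g : ℝ → ℝ} (hg : 0 ≤ g) {B : ℝ}
    (hint : ∀ n : ℕ, IntegrableOn (fun t => g (t - n)) (Ici 0))
    (hle : ∀ n : ℕ, ∫ t in Ici 0, g (t - n) ≤ B) : Integrable g := by
  have hpre : ∀ n : ℕ, (fun t : ℝ => t - n) ⁻¹' Ici (-n) = Ici 0 := fun n => by
    rw [preimage_sub_const_Ici, neg_add_cancel]
  have hshift : ∀ n : ℕ, IntegrableOn g (Ici (-n)) ∧ ∫ t in Ici (-n : ℝ), g t ≤ B := by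
    intro n
    have hmp := measurePreserving_sub_right volume (n : ℝ)
    refine ⟨(hmp.integrableOn_comp_preimage (measurableEmbedding_subRight _)).1 ?_, ?_⟩
    · rw [hpre]; exact hint n
    · rw [← hmp.setIntegral_preimage_emb (measurableEmbedding_subRight _), hpre]; exact hle n
  have hcover : AECover volume atTop fun n : ℕ => Ici (-n : ℝ) :=
    aecover_Ici (tendsto_neg_atTop_atBot.comp tendsto_natCast_atTop_atTop)
  exact hcover.integrable_of_integral_bounded_of_nonneg_ae B (fun n => (hshift n).1)
    (ae_of_all _ hg) (Eventually.of_forall fun n => (hshift n).2)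

end Translates

section Spline

open Set Function

theorem summable_mul_of_summable_sq {u v : ℕ → ℝ} (hu : Summable fun n => u n ^ 2)
    (hv : Summable fun n => v n ^ 2) : Summable fun n => u n * v n :=
  .of_norm_bounded (hu.add hv) fun n => by
    rw [Real.norm_eq_abs, abs_mul]
    nlinarith [two_mul_le_add_sq |u n| |v n|, sq_abs (u n), sq_abs (v n), abs_nonneg (u n),
      abs_nonneg (v n)]

noncomputable def splineExpansion (φ : ℝ → ℝ) (c : ℕ → ℝ) (t : ℝ) : ℝ :=
  ∑' n : ℕ, c n * φ (t - n)

def RieszBounds (φ : ℝ → ℝ) (a b : ℝ) : Prop :=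
  ∀ c : ℕ → ℝ, Summable (fun n => c n ^ 2) →
    a * l2norm c ≤ L2norm (splineExpansion φ c) ∧
      L2norm (splineExpansion φ c) ≤ b * l2norm c

theorem splineExpansion_delaySeq (φ : ℝ → ℝ) (n : ℕ) :
    splineExpansion φ (delaySeq n) = fun t => φ (t - n) :=
  funext fun _ => tsum_delaySeq_mul n _

theorem splineExpansion_cconv_delaySeq (φ : ℝ → ℝ) (d : ℕ) (c : ℕ → ℝ) (t : ℝ) :
    splineExpansion φ (cconv (delaySeq d) c) t = splineExpansion φ c (t - d) := by
  have hsupp : support (fun m : ℕ => cconv (delaySeq d) c m * φ (t - m)) ⊆ range (· + d) :=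
    fun m hm => ⟨m - d, Nat.sub_add_cancel <| by
      by_contra h
      exact hm (by dsimp only; rw [cconv_delaySeq, if_neg h, zero_mul])⟩
  rw [splineExpansion, ← (add_left_injective d).tsum_eq hsupp, splineExpansion]
  refine tsum_congr fun n => ?_
  rw [cconv_delaySeq, if_pos (Nat.le_add_left d n), Nat.add_sub_cancel]
  push_cast
  ring_nf

theorem splineExpansion_cconv_sub {φ : ℝ → ℝ} {t : ℝ}
    (hφ : Summable fun n : ℕ => φ (t - n) ^ 2) {e f c : ℕ → ℝ}
    (he : Summable fun n => |e n|) (hf : Summable fun n => |f n|)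
    (hc : Summable fun n => c n ^ 2) :
    splineExpansion φ (cconv (fun n => e n - f n) c) t =
      splineExpansion φ (cconv e c) t - splineExpansion φ (cconv f c) t := by
  rw [splineExpansion, splineExpansion, splineExpansion,
    ← (summable_mul_of_summable_sq (summable_sq_cconv he hc) hφ).tsum_sub
      (summable_mul_of_summable_sq (summable_sq_cconv hf hc) hφ)]
  exact tsum_congr fun n => by rw [cconv_sub_left, sub_mul]

theorem integrableOn_sq_of_L2norm_pos {f : ℝ → ℝ} (hf : 0 < L2norm f) :
    IntegrableOn (fun t => f t ^ 2) (Ici 0) := by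
  by_contra h
  rw [L2norm, integral_undef h, Real.sqrt_zero] at hf
  exact hf.false

theorem L2norm_congr_ae {f g : ℝ → ℝ} (h : f =ᵐ[volume.restrict (Ici 0)] g) :
    L2norm f = L2norm g := by
  rw [L2norm, L2norm, integral_congr_ae (h.mono fun t ht => by rw [ht])]

theorem RieszBounds.integrable_sq {φ : ℝ → ℝ} {a b : ℝ} (h : RieszBounds φ a b)
    (ha : 0 < a) : Integrable fun t => φ t ^ 2 := by
  have htr :
      ∀ n : ℕ, a ≤ L2norm (fun t => φ (t - n)) ∧ L2norm (fun t => φ (t - n)) ≤ b :=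
    fun n => by
      simpa only [splineExpansion_delaySeq, l2norm_delaySeq, mul_one] using
        h (delaySeq n) (by simpa only [delaySeq_sq] using (hasSum_delaySeq n).summable)
  exact integrable_of_setIntegral_comp_sub_nat_le (fun t => sq_nonneg (φ t))
    (fun n => integrableOn_sq_of_L2norm_pos (ha.trans_le (htr n).1))
    (fun n => (Real.sqrt_le_iff.1 (htr n).2).2)

end Spline

theorem stmt13_general (φ : ℝ → ℝ) (a b : ℝ) (ha : 0 < a) (hab : a ≤ b)
    (hRiesz : ∀ c : ℕ → ℝ, Summable (fun n => (c n) ^ 2) →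
      a * l2norm c ≤ L2norm (fun t => ∑' n : ℕ, c n * φ (t - n)) ∧
      L2norm (fun t => ∑' n : ℕ, c n * φ (t - n)) ≤ b * l2norm c)
    (ψ φs : ℕ → ℝ) (hψ : Summable fun n => |ψ n|) (hφs : Summable fun n => |φs n|)
    (d : ℕ) (c : ℕ → ℝ) (hc : Summable fun n => (c n) ^ 2)
    (x : ℝ → ℝ) (hx : ∀ t : ℝ, x t = ∑' n : ℕ, c n * φ (t - n))
    (hsamp : ∀ m : ℕ, x m = cconv φs c m)
    (y : ℝ → ℝ) (hy : ∀ t : ℝ, y t = ∑' n : ℕ, cconv ψ (fun k : ℕ => x k) n * φ (t - n)) :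
    L2norm (fun t => x (t - d) - y t) ≤
      (b / a) * HinfNorm (fun n => delaySeq d n - cconv ψ φs n) * L2norm x := by
  have hR : RieszBounds φ a b := hRiesz
  set E : ℕ → ℝ := fun n => delaySeq d n - cconv ψ φs n
  have hψφs : Summable fun n => |cconv ψ φs n| := summable_abs_cconv hψ hφs
  have hE : Summable fun n => |E n| := .of_nonneg_of_le (fun _ => abs_nonneg _)
    (fun _ => abs_sub _ _) ((summable_abs_delaySeq d).add hψφs)
  have hx' : x = splineExpansion φ c := funext hx
  have hy' : y = splineExpansion φ (cconv (cconv ψ φs) c) := funext fun t => by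
    rw [hy, ← cconv_assoc, ← funext hsamp]
    rfl
  have herr : (fun t => x (t - d) - y t) =ᵐ[volume.restrict (Set.Ici 0)]
      splineExpansion φ (cconv E c) := by
    filter_upwards [ae_restrict_of_ae (hR.integrable_sq ha).ae_summable_comp_sub_nat] with t ht
    rw [hx', hy', ← splineExpansion_cconv_delaySeq,
      splineExpansion_cconv_sub ht (summable_abs_delaySeq d) hψφs hc]
  have hlc : l2norm c ≤ L2norm x / a := by
    rw [le_div_iff₀ ha, hx', mul_comm]
    exact (hR c hc).1
  calc L2norm (fun t => x (t - d) - y t) = L2norm (splineExpansion φ (cconv E c)) :=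
        L2norm_congr_ae herr
    _ ≤ b * l2norm (cconv E c) := (hR _ (summable_sq_cconv hE hc)).2
    _ ≤ b * (HinfNorm E * (L2norm x / a)) := mul_le_mul_of_nonneg_left
        ((l2norm_cconv_le hE hc).trans (mul_le_mul_of_nonneg_left hlc (HinfNorm_nonneg E)))
        (ha.trans_le hab).le
    _ = b / a * HinfNorm E * L2norm x := by ring

/-- Proposition 3 of the paper: if `φ` generates a Riesz basis with constants
`0 < a ≤ b`, and `y` is the causal spline reconstruction of `x = ∑ c(n) φ(·-n)` using
a causal filter `ψ` with delay `d`, then the L² reconstruction error is bounded by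
`(b/a)` times the H^∞ norm of the discrete error system `z^{-d} - ψ(z)φ_s(z)`. -/
theorem stmt13 (φ : ℝ → ℝ) (a b : ℝ) (ha : 0 < a) (hab : a ≤ b)
    (hRiesz : ∀ c : ℕ → ℝ, Summable (fun n => (c n) ^ 2) →
      a * l2norm c ≤ L2norm (fun t => ∑' n : ℕ, c n * φ (t - n)) ∧
      L2norm (fun t => ∑' n : ℕ, c n * φ (t - n)) ≤ b * l2norm c)
    (ψ φs : ℕ → ℝ) (hψ : Summable fun n => |ψ n|) (hφs : Summable fun n => |φs n|)
    (hs : ∀ n : ℕ, φs n = φ n)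
    (d : ℕ) (c : ℕ → ℝ) (hc : Summable fun n => (c n) ^ 2)
    (x : ℝ → ℝ) (hx : ∀ t : ℝ, x t = ∑' n : ℕ, c n * φ (t - n))
    (hsamp : ∀ m : ℕ, x m = cconv φs c m)
    (y : ℝ → ℝ) (hy : ∀ t : ℝ, y t = ∑' n : ℕ, cconv ψ (fun k : ℕ => x k) n * φ (t - n)) :
    L2norm (fun t => x (t - d) - y t) ≤
      (b / a) * HinfNorm (fun n => delaySeq d n - cconv ψ φs n) * L2norm x :=
  stmt13_general φ a b ha hab hRiesz ψ φs hψ hφs d c hc x hx hsamp y hy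
end

section
/- Suppose matrices A ∈ ℝ^{n×n}, B ∈ ℝ^{n×1}, C ∈ ℝ^{1×n}, D ∈ ℝ, a scalar γ > 0, and a positive definite P ∈ ℝ^{n×n} satisfy the block matrix inequality [[AᵀPA - P, AᵀPB, Cᵀ], [BᵀPA, -γI + BᵀPB, Dᵀ], [C, D, -γI]] < 0 (negative definite). Then all eigenvalues of A lie in the open unit disc and the transfer function G(z) = C(zI - A)^{-1}B + D satisfies |G(e^{iθ})| < γ for all θ ∈ [0, 2π). -/
/-!
For `ξ = (x, u, w)` the quadratic form of the LMI matrix `M` is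
`(Ax + Bu)ᴴ P (Ax + Bu) - xᴴ P x - γ (|u|² + |w|²) + 2 Re (w̄ (Cx + Du))`,
and `ξᴴ M ξ < 0` for every nonzero complex `ξ`. If `Av = μv` with `v ≠ 0`, then
`ξ = (v, 0, 0)` gives `(|μ|² - 1) vᴴ P v < 0`, so `|μ| < 1`. Hence `zI - A` is invertible
for `|z| = 1`; `x = (zI - A)⁻¹ B`, `u = 1` make `Ax + Bu = zx`, so the `P`-terms cancel,
and `w = G(z) / γ` leaves `|G(z)|² / γ - γ < 0`.
-/

open Matrix

/-- The bounded real lemma LMI block matrix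
`[[AᵀPA - P, AᵀPB, Cᵀ], [BᵀPA, -γI + BᵀPB, Dᵀ], [C, D, -γI]]`. -/
noncomputable def brlLMI (n : ℕ) (A : Matrix (Fin n) (Fin n) ℝ)
    (B : Matrix (Fin n) (Fin 1) ℝ) (C : Matrix (Fin 1) (Fin n) ℝ) (D γ : ℝ)
    (P : Matrix (Fin n) (Fin n) ℝ) :
    Matrix ((Fin n ⊕ Fin 1) ⊕ Fin 1) ((Fin n ⊕ Fin 1) ⊕ Fin 1) ℝ :=
  Matrix.fromBlocks
    (Matrix.fromBlocks (Aᵀ * P * A - P) (Aᵀ * P * B) (Bᵀ * P * A)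
      ((-γ) • (1 : Matrix (Fin 1) (Fin 1) ℝ) + Bᵀ * P * B))
    (Matrix.of (Sum.elim (fun i : Fin n => Cᵀ i) (fun _ : Fin 1 => fun _ : Fin 1 => D)))
    (Matrix.of (Sum.elim (fun i : Fin n => Cᵀ i) (fun _ : Fin 1 => fun _ : Fin 1 => D)))ᵀ
    ((-γ) • (1 : Matrix (Fin 1) (Fin 1) ℝ))

open Complex (ofReal)

namespace Matrix

variable {m k l : Type*}

theorem map_ofReal_mul [Fintype k] (M : Matrix m k ℝ) (N : Matrix k l ℝ) :
    (M * N).map ofReal = M.map ofReal * N.map ofReal :=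
  Matrix.map_mul (f := Complex.ofRealHom)

theorem conjTranspose_map_ofReal (M : Matrix m k ℝ) : (M.map ofReal)ᴴ = Mᵀ.map ofReal := by
  rw [← conjTranspose_eq_transpose_of_trivial, conjTranspose_map]
  intro a
  simp

theorem star_dotProduct_map_ofReal_transpose_mulVec [Fintype m] [Fintype k]
    (N : Matrix m k ℝ) (x : k → ℂ) (y : m → ℂ) :
    star x ⬝ᵥ Nᵀ.map ofReal *ᵥ y = star (N.map ofReal *ᵥ x) ⬝ᵥ y := by
  rw [← conjTranspose_map_ofReal, dotProduct_mulVec, star_mulVec]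

theorem star_dotProduct_map_ofReal_transpose_mul_mul_mulVec [Fintype m] [Fintype k]
    [Fintype l] (N : Matrix m k ℝ) (Q : Matrix m m ℝ) (M : Matrix m l ℝ) (x : k → ℂ) (y : l → ℂ) :
    star x ⬝ᵥ (Nᵀ * Q * M).map ofReal *ᵥ y =
      star (N.map ofReal *ᵥ x) ⬝ᵥ Q.map ofReal *ᵥ M.map ofReal *ᵥ y := by
  rw [map_ofReal_mul, map_ofReal_mul, ← mulVec_mulVec, ← mulVec_mulVec,
    star_dotProduct_map_ofReal_transpose_mulVec]

theorem re_star_dotProduct_map_ofReal_mulVec [Fintype m] (M : Matrix m m ℝ) (v : m → ℂ) :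
    (star v ⬝ᵥ M.map ofReal *ᵥ v).re =
      (fun i => (v i).re) ⬝ᵥ M *ᵥ (fun i => (v i).re) +
        (fun i => (v i).im) ⬝ᵥ M *ᵥ (fun i => (v i).im) := by
  simp only [dotProduct, mulVec, Finset.mul_sum, map_apply, Pi.star_apply, Complex.re_sum,
    ← Finset.sum_add_distrib]
  refine Finset.sum_congr rfl fun i _ => Finset.sum_congr rfl fun j _ => ?_
  simp only [RCLike.star_def, Complex.mul_re, Complex.conj_re, Complex.conj_im,
    Complex.ofReal_re, Complex.ofReal_im, Complex.mul_im]
  ring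

theorem PosDef.re_star_dotProduct_map_ofReal_mulVec_pos [Fintype m] {M : Matrix m m ℝ}
    (hM : M.PosDef) {v : m → ℂ} (hv : v ≠ 0) : 0 < (star v ⬝ᵥ M.map ofReal *ᵥ v).re := by
  have hq (u : m → ℝ) : 0 ≤ u ⬝ᵥ M *ᵥ u := by
    simpa using hM.posSemidef.dotProduct_mulVec_nonneg u
  have hq_pos {u : m → ℝ} (hu : u ≠ 0) : 0 < u ⬝ᵥ M *ᵥ u := by
    simpa using hM.dotProduct_mulVec_pos hu
  rw [re_star_dotProduct_map_ofReal_mulVec]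
  by_cases hre : (fun i => (v i).re) = 0
  · have him : (fun i => (v i).im) ≠ 0 := fun him =>
      hv (funext fun i => Complex.ext (congrFun hre i) (congrFun him i))
    linarith [hq (fun i => (v i).re), hq_pos him]
  · linarith [hq_pos hre, hq (fun i => (v i).im)]

theorem re_star_dotProduct_map_ofReal_mulVec_neg [Fintype m] {M : Matrix m m ℝ}
    (hM : (-M).PosDef) {v : m → ℂ} (hv : v ≠ 0) : (star v ⬝ᵥ M.map ofReal *ᵥ v).re < 0 := by
  have h := hM.re_star_dotProduct_map_ofReal_mulVec_pos hv
  rwa [Matrix.map_neg _ Complex.ofReal_neg, neg_mulVec, dotProduct_neg, Complex.neg_re,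
    neg_pos] at h

theorem star_smul_dotProduct_mulVec_smul [Fintype m] (t : ℂ) (M : Matrix m m ℂ) (x : m → ℂ) :
    star (t • x) ⬝ᵥ M *ᵥ (t • x) = (‖t‖ ^ 2 : ℝ) * (star x ⬝ᵥ M *ᵥ x) := by
  rw [star_smul, smul_dotProduct, mulVec_smul, dotProduct_smul, smul_eq_mul, smul_eq_mul,
    ← mul_assoc, Complex.star_def, ← Complex.normSq_eq_conj_mul_self, Complex.normSq_eq_norm_sq]

theorem mulVec_of_unique {R : Type*} [CommSemiring R] [Fintype m] [Unique m] (M : Matrix m m R)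
    (u : m → R) : M *ᵥ u = M default default • u := by
  ext i
  simp [mulVec, dotProduct, Unique.eq_default i, mul_comm]

theorem exists_mulVec_eq_smul_of_mem_spectrum {K : Type*} [Field K] [Fintype m]
    [DecidableEq m] {A : Matrix m m K} {μ : K} (hμ : μ ∈ spectrum K A) :
    ∃ v ≠ 0, A *ᵥ v = μ • v := by
  rw [← spectrum_toLin', ← Module.End.hasEigenvalue_iff_mem_spectrum] at hμ
  obtain ⟨v, hv⟩ := hμ.exists_hasEigenvector
  exact ⟨v, hv.2, by simpa using hv.apply_eq_smul⟩

end Matrix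

section BoundedReal

variable {n : ℕ} {A : Matrix (Fin n) (Fin n) ℝ} {B : Matrix (Fin n) (Fin 1) ℝ}
  {C : Matrix (Fin 1) (Fin n) ℝ} {D γ : ℝ} {P : Matrix (Fin n) (Fin n) ℝ}

theorem star_dotProduct_brlLMI_map_mulVec (x : Fin n → ℂ) (u w : Fin 1 → ℂ) :
    star (Sum.elim (Sum.elim x u) w) ⬝ᵥ
        (brlLMI n A B C D γ P).map ofReal *ᵥ Sum.elim (Sum.elim x u) w =
      star (A.map ofReal *ᵥ x + B.map ofReal *ᵥ u) ⬝ᵥ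
          P.map ofReal *ᵥ (A.map ofReal *ᵥ x + B.map ofReal *ᵥ u)
        - star x ⬝ᵥ P.map ofReal *ᵥ x - γ * (star u ⬝ᵥ u + star w ⬝ᵥ w)
        + (star w ⬝ᵥ (C.map ofReal *ᵥ x + (D : ℂ) • u) +
          star (C.map ofReal *ᵥ x + (D : ℂ) • u) ⬝ᵥ w) := by
  have hE : of (Sum.elim (fun i => Cᵀ i) fun (_ _ : Fin 1) => D) =
      fromRows Cᵀ (of fun _ _ => D) := rfl
  simp only [brlLMI, hE, fromBlocks_map, Function.star_sumElim, fromBlocks_mulVec,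
    Sum.elim_comp_inl, Sum.elim_comp_inr, sumElim_dotProduct_sumElim, fromRows_map,
    transpose_fromRows, fromCols_map, fromRows_mulVec, fromCols_mulVec_sumElim,
    Matrix.map_sub _ Complex.ofReal_sub, Matrix.map_add _ Complex.ofReal_add, sub_mulVec,
    add_mulVec, dotProduct_add, dotProduct_sub, transpose_transpose, star_add, add_dotProduct,
    mulVec_add, star_dotProduct_map_ofReal_transpose_mul_mul_mulVec,
    star_dotProduct_map_ofReal_transpose_mulVec]
  simp only [mulVec_of_unique (Matrix.map _ ofReal)]
  simp only [map_apply, of_apply, Matrix.smul_apply, one_apply_eq, smul_eq_mul, mul_one,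
    star_smul, dotProduct_smul, smul_dotProduct, Complex.star_def, Complex.conj_ofReal,
    Complex.ofReal_neg]
  ring

theorem norm_lt_one_of_mulVec_eq_smul_of_negDef_brlLMI (hP : P.PosDef)
    (hLMI : (-(brlLMI n A B C D γ P)).PosDef) {μ : ℂ} {v : Fin n → ℂ} (hv : v ≠ 0)
    (hAv : A.map ofReal *ᵥ v = μ • v) : ‖μ‖ < 1 := by
  have hξ : Sum.elim (Sum.elim v 0) 0 ≠ (0 : (Fin n ⊕ Fin 1) ⊕ Fin 1 → ℂ) :=
    fun h => hv (funext fun i => congrFun h (.inl (.inl i)))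
  have hneg := re_star_dotProduct_map_ofReal_mulVec_neg hLMI hξ
  rw [star_dotProduct_brlLMI_map_mulVec] at hneg
  simp only [mulVec_zero, add_zero, smul_zero, star_zero, zero_dotProduct, dotProduct_zero,
    mul_zero, sub_zero, hAv, star_smul_dotProduct_mulVec_smul, ← sub_one_mul] at hneg
  rw [← Complex.ofReal_one, ← Complex.ofReal_sub, Complex.re_ofReal_mul] at hneg
  have hμ := neg_of_mul_neg_left hneg (hP.re_star_dotProduct_map_ofReal_mulVec_pos hv).le
  exact (sq_lt_one_iff₀ (norm_nonneg μ)).mp (sub_neg.mp hμ)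

theorem norm_transfer_lt_of_negDef_brlLMI (hγ : 0 < γ)
    (hLMI : (-(brlLMI n A B C D γ P)).PosDef) {z : ℂ} (hz : ‖z‖ = 1)
    (hR : IsUnit (z • (1 : Matrix (Fin n) (Fin n) ℂ) - A.map ofReal)) :
    ‖(C.map ofReal * (z • 1 - A.map ofReal)⁻¹ * B.map ofReal) 0 0 + (D : ℂ)‖ < γ := by
  set R := z • (1 : Matrix (Fin n) (Fin n) ℂ) - A.map ofReal
  set g := (C.map ofReal * R⁻¹ * B.map ofReal) 0 0 + (D : ℂ)
  set x := (R⁻¹ * B.map ofReal) *ᵥ 1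
  have hx : A.map ofReal *ᵥ x + B.map ofReal *ᵥ 1 = z • x := by
    have hRx : R *ᵥ x = B.map ofReal *ᵥ 1 := by
      rw [mulVec_mulVec, mul_nonsing_inv_cancel_left _ _ ((isUnit_iff_isUnit_det R).mp hR)]
    rw [← hRx, sub_mulVec, smul_mulVec, one_mulVec, add_sub_cancel]
  have hCx : C.map ofReal *ᵥ x + (D : ℂ) • 1 = fun _ => g := by
    ext i
    rw [Subsingleton.elim i 0, mulVec_mulVec, ← Matrix.mul_assoc]
    simp [g, mulVec, dotProduct]
  have hξ : Sum.elim (Sum.elim x (1 : Fin 1 → ℂ)) (fun _ : Fin 1 => g / γ) ≠ 0 :=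
    fun h => one_ne_zero (congrFun h (.inl (.inr 0)))
  have hneg := re_star_dotProduct_map_ofReal_mulVec_neg hLMI hξ
  rw [star_dotProduct_brlLMI_map_mulVec, hx, hCx, star_smul_dotProduct_mulVec_smul, hz] at hneg
  simp only [dotProduct, Finset.univ_unique, Finset.sum_singleton, Pi.star_apply, Pi.one_apply,
    star_one, one_mul, mul_one, one_pow, Complex.ofReal_one, sub_self, zero_sub, star_div₀,
    RCLike.star_def, Complex.conj_ofReal, Complex.add_re, Complex.neg_re, Complex.mul_re,
    Complex.ofReal_re, Complex.one_re, Complex.div_ofReal_re, Complex.div_ofReal_im,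
    Complex.conj_re, Complex.conj_im, Complex.ofReal_im] at hneg
  have hsq : ‖g‖ ^ 2 < γ ^ 2 := by
    rw [Complex.sq_norm, Complex.normSq_apply]
    field_simp at hneg
    nlinarith
  exact (pow_lt_pow_iff_left₀ (norm_nonneg g) hγ.le two_ne_zero).mp hsq

end BoundedReal

/-- Discrete-time bounded real lemma (sufficiency): if `P ≻ 0` and the LMI is negative
definite, then `A` is Schur stable and the transfer function
`G(z) = C(zI - A)⁻¹B + D` satisfies `|G(e^{iθ})| < γ` on the unit circle. -/
theorem stmt16 (n : ℕ) (A : Matrix (Fin n) (Fin n) ℝ) (B : Matrix (Fin n) (Fin 1) ℝ)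
    (C : Matrix (Fin 1) (Fin n) ℝ) (D : ℝ) (γ : ℝ) (hγ : 0 < γ)
    (P : Matrix (Fin n) (Fin n) ℝ) (hP : P.PosDef)
    (hLMI : (-(brlLMI n A B C D γ P)).PosDef) :
    (∀ μ ∈ spectrum ℂ (A.map Complex.ofReal), ‖μ‖ < 1) ∧
    ∀ θ : ℝ,
      ‖(((C.map Complex.ofReal) *
            (Complex.exp (θ * Complex.I) • (1 : Matrix (Fin n) (Fin n) ℂ) -
              A.map Complex.ofReal)⁻¹ * (B.map Complex.ofReal)) 0 0 + (D : ℂ))‖ < γ := by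
  have hstable : ∀ μ ∈ spectrum ℂ (A.map ofReal), ‖μ‖ < 1 := fun μ hμ => by
    obtain ⟨v, hv, hAv⟩ := exists_mulVec_eq_smul_of_mem_spectrum hμ
    exact norm_lt_one_of_mulVec_eq_smul_of_negDef_brlLMI hP hLMI hv hAv
  refine ⟨hstable, fun θ => ?_⟩
  have hz := Complex.norm_exp_ofReal_mul_I θ
  have hR : Complex.exp (θ * Complex.I) ∉ spectrum ℂ (A.map ofReal) :=
    fun h => (hstable _ h).ne hz
  rw [spectrum.notMem_iff, Algebra.algebraMap_eq_smul_one] at hR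
  exact norm_transfer_lt_of_negDef_brlLMI hγ hLMI hz hR
end

section
/- The Z-transform of the sampled cubic B-spline admits the non-causal stable decomposition: for all z with |α| < |z| < 1/|α|, 6/(z + 4 + z⁻¹) = -(6α/(1-α²)) · (1/(1 - αz⁻¹) + 1/(1 - αz) - 1), where α = -2 + √3. -/
/-!
`α = -2 + √3` is the root of `a² + 4a + 1` inside the unit disc, so `α⁻¹` is the other root
and `z + 4 + z⁻¹ = (z - α)(αz - 1)/(αz)`. Partial fractions split this into the causal pole
at `α` and the anti-causal pole at `α⁻¹`, and on the annulus `|α| < |z| < 1/|α|` none of the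
denominators vanishes.
-/

/-- `α = -2 + √3`, the stable pole of the direct cubic B-spline filter. -/
noncomputable def alphaC : ℂ := ((-2 + Real.sqrt 3 : ℝ) : ℂ)

section PartialFractions

variable {K : Type*} [Field K] {a z : K}

lemma mul_add_four_add_inv_eq (ha : a ^ 2 + 4 * a + 1 = 0) (hz : z ≠ 0) :
    a * z * (z + 4 + z⁻¹) = (z - a) * (a * z - 1) := by
  field_simp
  linear_combination z * ha

lemma div_add_four_add_inv_eq_partial_fractions (ha : a ^ 2 + 4 * a + 1 = 0)
    (ha1 : 1 - a ^ 2 ≠ 0) (hz : z ≠ 0) (hza : z ≠ a) (haz : a * z ≠ 1) :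
    6 / (z + 4 + z⁻¹) =
      -(6 * a / (1 - a ^ 2)) * (1 / (1 - a * z⁻¹) + 1 / (1 - a * z) - 1) := by
  have ha0 : a ≠ 0 := by rintro rfl; norm_num at ha
  have hza' : z - a ≠ 0 := sub_ne_zero.2 hza
  have haz' : 1 - a * z ≠ 0 := sub_ne_zero.2 haz.symm
  have hden : z + 4 + z⁻¹ = -((z - a) * (1 - a * z)) / (a * z) := by
    rw [eq_div_iff (mul_ne_zero ha0 hz), mul_comm, mul_add_four_add_inv_eq ha hz]
    ring
  have hsum : 1 / (1 - a * z⁻¹) + 1 / (1 - a * z) - 1 =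
      z * (1 - a ^ 2) / ((z - a) * (1 - a * z)) := by
    field_simp
    ring
  rw [hden, hsum]
  field_simp

end PartialFractions

lemma alphaC_sq_add_four_mul_add_one : alphaC ^ 2 + 4 * alphaC + 1 = 0 := by
  have h3 : (Real.sqrt 3 : ℂ) ^ 2 = 3 := by
    exact_mod_cast Real.sq_sqrt (by norm_num : (0 : ℝ) ≤ 3)
  simp only [alphaC]
  push_cast
  linear_combination h3

lemma sqrt_three_mem_Ioo : Real.sqrt 3 ∈ Set.Ioo 1 2 := by
  constructor
  · rw [Real.lt_sqrt zero_le_one]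
    norm_num
  · rw [Real.sqrt_lt' two_pos]
    norm_num

lemma norm_alphaC : ‖alphaC‖ = 2 - Real.sqrt 3 := by
  rw [alphaC, Complex.norm_real, Real.norm_eq_abs, abs_of_neg (by linarith [sqrt_three_mem_Ioo.2])]
  ring

lemma norm_alphaC_mem_Ioo : ‖alphaC‖ ∈ Set.Ioo 0 1 := by
  obtain ⟨hgt, hlt⟩ := sqrt_three_mem_Ioo
  rw [norm_alphaC]
  constructor <;> linarith

/-- Non-causal stable decomposition of the ideal direct cubic B-spline filter: on the
annulus `|α| < |z| < 1/|α|`,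
`6/(z + 4 + z⁻¹) = -(6α/(1-α²)) (1/(1-αz⁻¹) + 1/(1-αz) - 1)`. -/
theorem stmt18 :
    ∀ z : ℂ, ‖alphaC‖ < ‖z‖ →
      ‖z‖ < 1 / ‖alphaC‖ →
      6 / (z + 4 + z⁻¹) =
        -(6 * alphaC / (1 - alphaC ^ 2)) *
          (1 / (1 - alphaC * z⁻¹) + 1 / (1 - alphaC * z) - 1) := by
  intro z hinner houter
  obtain ⟨hpos, hlt⟩ := norm_alphaC_mem_Ioo
  apply div_add_four_add_inv_eq_partial_fractions alphaC_sq_add_four_mul_add_one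
  · refine sub_ne_zero.2 fun h => ?_
    have := congrArg norm h
    rw [norm_one, norm_pow] at this
    nlinarith
  · exact norm_pos_iff.1 (hpos.trans hinner)
  · exact fun h => hinner.ne (congrArg norm h).symm
  · intro h
    have := congrArg norm h
    rw [norm_mul, norm_one] at this
    rw [lt_div_iff₀ hpos] at houter
    linarith
end
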